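/- arXiv:2103.13651 — 6 statements merged into one kernel-verified Lean document; each statement's English description precedes it below -/
import Mathlib

section
/- Let f : ℝⁿ → ℝ be convex, continuous, and bounded from below, let x ∈ ℝⁿ, and let p ∈ ℝⁿ be a direction such that sup_{g ∈ ∂f(x)} gᵀp ≤ -(m/2)‖ḡ‖² < 0 where p = -B ḡ for some symmetric matrix B with mI ⪯ B ⪯ MI and ḡ ∈ ∂f(x), ḡ ≠ 0. Then there exist τ > 0 and γ ∈ (0,1) such that for all α ∈ [0, τ], f(x + α p) ≤ f(x) - γ α ‖p‖². -/
open scoped RealInnerProductSpace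

/-- Convex subdifferential of `f` at `x`. -/
def subdiff {n : ℕ} (f : EuclideanSpace ℝ (Fin n) → ℝ) (x : EuclideanSpace ℝ (Fin n)) :
    Set (EuclideanSpace ℝ (Fin n)) :=
  {g | ∀ y, f x + ⟪g, y - x⟫ ≤ f y}

namespace Stmt0Aux

variable {n : ℕ} (f : EuclideanSpace ℝ (Fin n) → ℝ) (x : EuclideanSpace ℝ (Fin n))

noncomputable def slope (v : EuclideanSpace ℝ (Fin n)) (t : ℝ) : ℝ :=
  (f (x + t • v) - f x) / t

def slopeSet (v : EuclideanSpace ℝ (Fin n)) : Set ℝ :=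
  slope f x v '' Set.Ioi 0

noncomputable def ddf (v : EuclideanSpace ℝ (Fin n)) : ℝ :=
  sInf (slopeSet f x v)

variable {f x}

lemma slopeSet_nonempty (v : EuclideanSpace ℝ (Fin n)) : (slopeSet f x v).Nonempty :=
  ⟨slope f x v 1, ⟨1, by norm_num, rfl⟩⟩

lemma slope_lb {gbar : EuclideanSpace ℝ (Fin n)} (hg : gbar ∈ subdiff f x)
    (v : EuclideanSpace ℝ (Fin n)) {t : ℝ} (ht : 0 < t) :
    ⟪gbar, v⟫ ≤ slope f x v t := by
  have h := hg (x + t • v)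
  simp only [add_sub_cancel_left, real_inner_smul_right] at h
  rw [slope, le_div_iff₀ ht]
  linarith [h]

lemma slopeSet_bddBelow {gbar : EuclideanSpace ℝ (Fin n)} (hg : gbar ∈ subdiff f x)
    (v : EuclideanSpace ℝ (Fin n)) : BddBelow (slopeSet f x v) := by
  refine ⟨⟪gbar, v⟫, ?_⟩
  rintro q ⟨t, ht, rfl⟩
  exact slope_lb hg v ht

lemma ddf_le_slope {gbar : EuclideanSpace ℝ (Fin n)} (hg : gbar ∈ subdiff f x)
    (v : EuclideanSpace ℝ (Fin n)) {t : ℝ} (ht : 0 < t) :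
    ddf f x v ≤ slope f x v t :=
  csInf_le (slopeSet_bddBelow hg v) ⟨t, ht, rfl⟩

lemma slope_mono (hconv : ConvexOn ℝ Set.univ f) (v : EuclideanSpace ℝ (Fin n))
    {s t : ℝ} (hs : 0 < s) (hst : s ≤ t) :
    slope f x v s ≤ slope f x v t := by
  have ht : 0 < t := lt_of_lt_of_le hs hst
  have hθ : 0 ≤ s / t := by positivity
  have hθ1 : s / t ≤ 1 := by rw [div_le_one ht]; exact hst
  have hcv := hconv.2 (Set.mem_univ x) (Set.mem_univ (x + t • v))
      (by linarith : (0:ℝ) ≤ 1 - s / t) hθ (by ring)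
  have hpoint : (1 - s / t) • x + (s / t) • (x + t • v) = x + s • v := by
    rw [smul_add, smul_smul]
    rw [div_mul_cancel₀ _ (ne_of_gt ht)]
    module
  rw [hpoint] at hcv
  rw [slope, slope, div_le_div_iff₀ hs ht]
  have h2 : f (x + s • v) ≤ (1 - s / t) * f x + (s / t) * f (x + t • v) := hcv
  have h4 : f (x + s • v) * t ≤ ((1 - s / t) * f x + (s / t) * f (x + t • v)) * t :=
    mul_le_mul_of_nonneg_right h2 ht.le
  have h5 : ((1 - s / t) * f x + (s / t) * f (x + t • v)) * t
      = f x * t - s * f x + s * f (x + t • v) := by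
    field_simp
  linarith

lemma inner_le_ddf {gbar : EuclideanSpace ℝ (Fin n)} (hg : gbar ∈ subdiff f x)
    (v : EuclideanSpace ℝ (Fin n)) : ⟪gbar, v⟫ ≤ ddf f x v := by
  refine le_csInf (slopeSet_nonempty v) ?_
  rintro q ⟨t, ht, rfl⟩
  exact slope_lb hg v ht

lemma ddf_zero : ddf f x 0 = 0 := by
  have : slopeSet f x 0 = {0} := by
    ext q
    constructor
    · rintro ⟨t, ht, rfl⟩
      simp [slope]
    · rintro rfl
      exact ⟨1, by norm_num, by simp [slope]⟩
  rw [ddf, this, csInf_singleton]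

lemma ddf_smul_le {gbar : EuclideanSpace ℝ (Fin n)} (hg : gbar ∈ subdiff f x)
    (v : EuclideanSpace ℝ (Fin n)) {c : ℝ} (hc : 0 < c) :
    ddf f x (c • v) ≤ c * ddf f x v := by
  have key : ∀ t > (0:ℝ), ddf f x (c • v) ≤ c * slope f x v t := by
    intro t ht
    have h1 : ddf f x (c • v) ≤ slope f x (c • v) (t / c) :=
      ddf_le_slope hg _ (by positivity)
    have h2 : slope f x (c • v) (t / c) = c * slope f x v t := by
      rw [slope, slope, smul_smul, div_mul_cancel₀ _ (ne_of_gt hc)]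
      field_simp
    linarith [h1, h2.le, h2.ge]
  have : ddf f x (c • v) / c ≤ ddf f x v := by
    refine le_csInf (slopeSet_nonempty v) ?_
    rintro q ⟨t, ht, rfl⟩
    rw [div_le_iff₀ hc, mul_comm]
    exact key t ht
  calc ddf f x (c • v) = c * (ddf f x (c • v) / c) := by field_simp
    _ ≤ c * ddf f x v := by
        exact mul_le_mul_of_nonneg_left this hc.le

lemma ddf_smul {gbar : EuclideanSpace ℝ (Fin n)} (hg : gbar ∈ subdiff f x)
    (v : EuclideanSpace ℝ (Fin n)) {c : ℝ} (hc : 0 < c) :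
    ddf f x (c • v) = c * ddf f x v := by
  refine le_antisymm (ddf_smul_le hg v hc) ?_
  have h := ddf_smul_le hg (c • v) (c := c⁻¹) (by positivity)
  rw [smul_smul, inv_mul_cancel₀ (ne_of_gt hc), one_smul] at h
  calc c * ddf f x v ≤ c * (c⁻¹ * ddf f x (c • v)) :=
        mul_le_mul_of_nonneg_left h hc.le
    _ = ddf f x (c • v) := by field_simp

lemma ddf_add (hconv : ConvexOn ℝ Set.univ f) {gbar : EuclideanSpace ℝ (Fin n)}
    (hg : gbar ∈ subdiff f x) (u v : EuclideanSpace ℝ (Fin n)) :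
    ddf f x (u + v) ≤ ddf f x u + ddf f x v := by
  refine le_of_forall_pos_le_add ?_
  intro ε hε
  obtain ⟨q1, ⟨t1, ht1, rfl⟩, hq1⟩ :=
    exists_lt_of_csInf_lt (slopeSet_nonempty u)
      (show ddf f x u < ddf f x u + ε / 2 by linarith)
  obtain ⟨q2, ⟨t2, ht2, rfl⟩, hq2⟩ :=
    exists_lt_of_csInf_lt (slopeSet_nonempty v)
      (show ddf f x v < ddf f x v + ε / 2 by linarith)
  rw [Set.mem_Ioi] at ht1 ht2
  set t : ℝ := min t1 t2 / 2 with htdef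
  have ht : 0 < t := by rw [htdef]; exact div_pos (lt_min ht1 ht2) two_pos
  have h2t1 : 2 * t ≤ t1 := by
    have := min_le_left t1 t2; rw [htdef]; linarith
  have h2t2 : 2 * t ≤ t2 := by
    have := min_le_right t1 t2; rw [htdef]; linarith
  have hcv := hconv.2 (Set.mem_univ (x + (2*t) • u)) (Set.mem_univ (x + (2*t) • v))
      (by norm_num : (0:ℝ) ≤ 1/2) (by norm_num : (0:ℝ) ≤ 1/2) (by norm_num)
  have hpoint : (1/2 : ℝ) • (x + (2*t) • u) + (1/2 : ℝ) • (x + (2*t) • v)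
      = x + t • (u + v) := by
    rw [smul_add, smul_add, smul_smul, smul_smul, smul_add]
    norm_num
    module
  rw [hpoint] at hcv
  have hslope : slope f x (u + v) t ≤ slope f x u (2*t) + slope f x v (2*t) := by
    simp only [smul_eq_mul] at hcv
    rw [slope, slope, slope, ← add_div, div_le_div_iff₀ ht (by positivity)]
    nlinarith [mul_le_mul_of_nonneg_right hcv ht.le]
  have hm1 : slope f x u (2*t) ≤ slope f x u t1 := slope_mono hconv u (by positivity) h2t1
  have hm2 : slope f x v (2*t) ≤ slope f x v t2 := slope_mono hconv v (by positivity) h2t2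
  have := ddf_le_slope hg (u + v) ht
  linarith

/-- Max formula direction via Hahn-Banach: there is a subgradient achieving `ddf` at `p`. -/
lemma exists_subgrad (hconv : ConvexOn ℝ Set.univ f) {gbar : EuclideanSpace ℝ (Fin n)}
    (hg : gbar ∈ subdiff f x) {p : EuclideanSpace ℝ (Fin n)} (hpne : p ≠ 0) :
    ∃ g ∈ subdiff f x, ⟪g, p⟫ = ddf f x p := by
  set N : EuclideanSpace ℝ (Fin n) → ℝ := ddf f x with hN
  have N_hom : ∀ c : ℝ, 0 < c → ∀ v, N (c • v) = c * N v := fun c hc v => ddf_smul hg v hc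
  have N_add : ∀ u v, N (u + v) ≤ N u + N v := fun u v => ddf_add hconv hg u v
  have hneg : -N p ≤ N (-p) := by
    have := N_add p (-p)
    simp only [add_neg_cancel] at this
    rw [show ((0:EuclideanSpace ℝ (Fin n))) = 0 from rfl] at this
    have h0 : N 0 = 0 := ddf_zero
    linarith [this, h0.ge, h0.le]
  set φ := LinearPMap.mkSpanSingleton (K := ℝ) (L := ℝ) (σ := RingHom.id ℝ) p (N p) hpne with hφ
  have hf : ∀ z : φ.domain, φ z ≤ N z := by
    rintro ⟨z, hz⟩
    rw [LinearPMap.domain_mkSpanSingleton] at hz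
    obtain ⟨c, rfl⟩ := Submodule.mem_span_singleton.mp hz
    have happ : φ ⟨c • p, hz⟩ = c • N p := LinearPMap.mkSpanSingleton'_apply _ _ _ c _
    rw [happ]
    rcases lt_trichotomy c 0 with hc | hc | hc
    · have h1 : N (c • p) = (-c) * N (-p) := by
        rw [show c • p = (-c) • (-p) by module]
        exact N_hom (-c) (by linarith) (-p)
      have : c * N p ≤ (-c) * N (-p) := by nlinarith [hneg]
      simpa [smul_eq_mul, h1] using this
    · subst hc
      simp only [zero_smul, smul_eq_mul, zero_mul]
      rw [hN]; rw [ddf_zero]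
    · rw [N_hom c hc p]; simp [smul_eq_mul]
  obtain ⟨g, hgext, hgle⟩ := exists_extension_of_le_sublinear φ N N_hom N_add hf
  set gvec : EuclideanSpace ℝ (Fin n) :=
    (InnerProductSpace.toDual ℝ (EuclideanSpace ℝ (Fin n))).symm
      (LinearMap.toContinuousLinearMap g) with hgvec
  have hinner : ∀ v, ⟪gvec, v⟫ = g v := by
    intro v
    rw [hgvec, InnerProductSpace.toDual_symm_apply]
    rfl
  have hpmem : p ∈ φ.domain := by
    rw [hφ, LinearPMap.domain_mkSpanSingleton]
    exact Submodule.mem_span_singleton_self p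
  have hgp : g p = N p := by
    have h := hgext ⟨p, hpmem⟩
    have happ : φ ⟨p, hpmem⟩ = N p := LinearPMap.mkSpanSingleton'_apply_self _ _ _ _
    rw [h, happ]
  refine ⟨gvec, ?_, by rw [hinner p, hgp]⟩
  intro y
  have h1 : g (y - x) ≤ N (y - x) := hgle (y - x)
  have h2 : N (y - x) ≤ slope f x (y - x) 1 := ddf_le_slope hg _ one_pos
  have h3 : slope f x (y - x) 1 = f y - f x := by
    simp [slope]
  rw [hinner]
  linarith

end Stmt0Aux

set_option maxHeartbeats 1000000 in
theorem stmt0 {n : ℕ} (f : EuclideanSpace ℝ (Fin n) → ℝ)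
    (hconv : ConvexOn ℝ Set.univ f) (hcont : Continuous f)
    (hbdd : BddBelow (Set.range f))
    (x p gbar : EuclideanSpace ℝ (Fin n))
    (B : EuclideanSpace ℝ (Fin n) →L[ℝ] EuclideanSpace ℝ (Fin n))
    (m M : ℝ) (hm : 0 < m) (hmM : m ≤ M)
    (hsym : ∀ u v, ⟪B u, v⟫ = ⟪u, B v⟫)
    (hlow : ∀ v, m * ‖v‖ ^ 2 ≤ ⟪B v, v⟫)
    (hup : ∀ v, ⟪B v, v⟫ ≤ M * ‖v‖ ^ 2)
    (hgbar : gbar ∈ subdiff f x) (hgne : gbar ≠ 0)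
    (hp : p = -(B gbar))
    (hsup : ∀ g ∈ subdiff f x, ⟪g, p⟫ ≤ -(m / 2) * ‖gbar‖ ^ 2)
    (hneg : -(m / 2) * ‖gbar‖ ^ 2 < 0) :
    ∃ τ > 0, ∃ γ ∈ Set.Ioo (0 : ℝ) 1, ∀ α ∈ Set.Icc (0 : ℝ) τ,
      f (x + α • p) ≤ f x - γ * α * ‖p‖ ^ 2 := by
  have hM : 0 < M := lt_of_lt_of_le hm hmM
  have hgnorm : 0 < ‖gbar‖ := norm_pos_iff.mpr hgne
  have hBg_pos : 0 < ⟪B gbar, gbar⟫ := by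
    have := hlow gbar
    nlinarith [sq_nonneg ‖gbar‖]
  have hBgne : B gbar ≠ 0 := by
    intro h
    rw [h, inner_zero_left] at hBg_pos
    exact lt_irrefl 0 hBg_pos
  have hpne : p ≠ 0 := by
    rw [hp]
    simpa using hBgne
  have hppos : 0 < ‖p‖ := norm_pos_iff.mpr hpne
  -- polarization bound
  have hMb : ∀ u w : EuclideanSpace ℝ (Fin n), ⟪B u, w⟫ ≤ (M / 4) * ‖u + w‖ ^ 2 := by
    intro u w
    have e1 : ⟪B (u + w), u + w⟫ = ⟪B u, u⟫ + 2 * ⟪B u, w⟫ + ⟪B w, w⟫ := by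
      have hs : ⟪B w, u⟫ = ⟪B u, w⟫ := by
        rw [hsym w u, real_inner_comm]
      rw [map_add, inner_add_left, inner_add_right, inner_add_right]
      linarith [hs]
    have e2 : ⟪B (u - w), u - w⟫ = ⟪B u, u⟫ - 2 * ⟪B u, w⟫ + ⟪B w, w⟫ := by
      have hs : ⟪B w, u⟫ = ⟪B u, w⟫ := by
        rw [hsym w u, real_inner_comm]
      rw [map_sub, inner_sub_left, inner_sub_right, inner_sub_right]
      linarith [hs]
    have h1 := hup (u + w)
    have h2 := hlow (u - w)
    nlinarith [mul_nonneg hm.le (sq_nonneg ‖u - w‖)]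
  -- bound ‖B gbar‖ ≤ M ‖gbar‖
  have hbnorm : ‖B gbar‖ ≤ M * ‖gbar‖ := by
    set a : ℝ := ‖gbar‖ with ha
    set b : ℝ := ‖B gbar‖ with hb
    have hbpos : 0 < b := norm_pos_iff.mpr hBgne
    set t : ℝ := Real.sqrt (b / a) with htdef
    have htpos : 0 < t := Real.sqrt_pos.mpr (by positivity)
    have ht2 : t ^ 2 = b / a := Real.sq_sqrt (by positivity)
    set u : EuclideanSpace ℝ (Fin n) := t • gbar with hu
    set w : EuclideanSpace ℝ (Fin n) := t⁻¹ • (B gbar) with hw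
    have hBuw : ⟪B u, w⟫ = b ^ 2 := by
      rw [hu, hw, map_smul, inner_smul_left, inner_smul_right]
      simp only [RCLike.star_def, conj_trivial]
      rw [real_inner_self_eq_norm_sq]
      field_simp
      rw [hb]
    have hnu : ‖u‖ ^ 2 = t ^ 2 * a ^ 2 := by
      rw [hu, norm_smul, Real.norm_eq_abs, abs_of_pos htpos, mul_pow]
    have hnw : ‖w‖ ^ 2 = (t⁻¹) ^ 2 * b ^ 2 := by
      rw [hw, norm_smul, Real.norm_eq_abs, abs_of_pos (by positivity : (0:ℝ) < t⁻¹), mul_pow]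
    have huw : ⟪u, w⟫ = ⟪gbar, B gbar⟫ := by
      rw [hu, hw, inner_smul_left, inner_smul_right]
      simp only [RCLike.star_def, conj_trivial]
      field_simp
    have hcs : ⟪gbar, B gbar⟫ ≤ a * b := by
      have := real_inner_le_norm gbar (B gbar)
      rw [← ha, ← hb] at this
      exact this
    have hexp : ‖u + w‖ ^ 2 = t ^ 2 * a ^ 2 + 2 * ⟪gbar, B gbar⟫ + (t⁻¹) ^ 2 * b ^ 2 := by
      rw [← hnu, ← hnw, ← huw]
      rw [norm_add_sq_real]
    have ht2' : t ^ 2 * a ^ 2 = a * b := by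
      rw [ht2]
      field_simp
    have ht2'' : (t⁻¹) ^ 2 * b ^ 2 = a * b := by
      rw [inv_pow, ht2]
      field_simp
    have hkey := hMb u w
    rw [hBuw, hexp, ht2', ht2''] at hkey
    nlinarith [hkey, hcs, hbpos, hgnorm]
  have hpnorm : ‖p‖ ^ 2 ≤ M ^ 2 * ‖gbar‖ ^ 2 := by
    have hpn : ‖p‖ = ‖B gbar‖ := by rw [hp, norm_neg]
    rw [hpn]
    nlinarith [hbnorm, norm_nonneg (B gbar), norm_nonneg gbar, hM]
  -- directional derivative bound
  obtain ⟨g, hgmem, hgipp⟩ := Stmt0Aux.exists_subgrad hconv hgbar hpne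
  have hddf : Stmt0Aux.ddf f x p ≤ -(m / 2) * ‖gbar‖ ^ 2 := by
    rw [← hgipp]
    exact hsup g hgmem
  set c : ℝ := m / (2 * M ^ 2) with hc
  have hcpos : 0 < c := by positivity
  have h1 : Stmt0Aux.ddf f x p ≤ -c * ‖p‖ ^ 2 := by
    have : c * ‖p‖ ^ 2 ≤ m / 2 * ‖gbar‖ ^ 2 := by
      rw [hc]
      rw [div_mul_eq_mul_div, div_le_iff₀ (by positivity : (0:ℝ) < 2 * M ^ 2)]
      nlinarith [hpnorm, hm]
    linarith [hddf]
  set γ : ℝ := min (c / 2) (1 / 2) with hγdef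
  have hγ0 : 0 < γ := lt_min (by positivity) (by norm_num)
  have hγ1 : γ < 1 := lt_of_le_of_lt (min_le_right _ _) (by norm_num)
  have hγc : γ < c := lt_of_le_of_lt (min_le_left _ _) (by linarith)
  have hlt : Stmt0Aux.ddf f x p < -γ * ‖p‖ ^ 2 := by
    have : -c * ‖p‖ ^ 2 < -γ * ‖p‖ ^ 2 := by
      have := mul_pos (sub_pos.mpr hγc) (pow_pos hppos 2)
      nlinarith [this]
    linarith
  obtain ⟨q, ⟨τ, hτ, rfl⟩, hq⟩ :=
    exists_lt_of_csInf_lt (Stmt0Aux.slopeSet_nonempty p) hlt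
  rw [Set.mem_Ioi] at hτ
  have hkey : f (x + τ • p) - f x ≤ -γ * τ * ‖p‖ ^ 2 := by
    rw [Stmt0Aux.slope, div_lt_iff₀ hτ] at hq
    nlinarith [hq]
  refine ⟨τ, hτ, γ, ⟨hγ0, hγ1⟩, ?_⟩
  rintro α ⟨hα0, hατ⟩
  rcases eq_or_lt_of_le hα0 with h | h
  · rw [← h]
    simp
  · set θ : ℝ := α / τ with hθdef
    have hθ0 : 0 < θ := by positivity
    have hθ1 : θ ≤ 1 := by rw [hθdef, div_le_one hτ]; exact hατ
    have hθτ : θ * τ = α := div_mul_cancel₀ _ (ne_of_gt hτ)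
    have hcv := hconv.2 (Set.mem_univ x) (Set.mem_univ (x + τ • p))
        (by linarith : (0:ℝ) ≤ 1 - θ) hθ0.le (by ring)
    have hpoint : (1 - θ) • x + θ • (x + τ • p) = x + α • p := by
      rw [smul_add, smul_smul, hθτ]
      module
    rw [hpoint] at hcv
    simp only [smul_eq_mul] at hcv
    have h2 : θ * (f (x + τ • p) - f x) ≤ θ * (-γ * τ * ‖p‖ ^ 2) :=
      mul_le_mul_of_nonneg_left hkey hθ0.le
    have h3 : θ * (-γ * τ * ‖p‖ ^ 2) = -γ * α * ‖p‖ ^ 2 := by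
      rw [← hθτ]; ring
    nlinarith [hcv, h2, h3]
end

section
/- Let f : ℝⁿ → ℝ be convex and differentiable-free, and suppose δ(α) := f(x + αp) satisfies δ'(0⁺) = sup_{g ∈ ∂f(x)} gᵀp < 0, with f bounded below. Then for any η ∈ (0,1) there exists a unique τ > 0 such that f(x + τp) = f(x) + τ η sup_{g ∈ ∂f(x)} gᵀp, and f(x + αp) ≤ f(x) + α η sup_{g ∈ ∂f(x)} gᵀp for all α ∈ [0, τ]. -/
open scoped RealInnerProductSpace

theorem stmt2 {n : ℕ} (f : EuclideanSpace ℝ (Fin n) → ℝ)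
    (hconv : ConvexOn ℝ Set.univ f) (hcont : Continuous f)
    (hbdd : BddBelow (Set.range f))
    (x p : EuclideanSpace ℝ (Fin n))
    (s : ℝ) (hs : IsLUB ((fun g => ⟪g, p⟫) '' subdiff f x) s)
    (hderiv : HasDerivWithinAt (fun α : ℝ => f (x + α • p)) s (Set.Ici 0) 0)
    (hneg : s < 0)
    (η : ℝ) (hη : η ∈ Set.Ioo (0 : ℝ) 1) :
    ∃! τ : ℝ, 0 < τ ∧ f (x + τ • p) = f x + τ * η * s ∧
      ∀ α ∈ Set.Icc (0 : ℝ) τ, f (x + α • p) ≤ f x + α * η * s := by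
  obtain ⟨hη0, hη1⟩ := hη
  set g : ℝ → ℝ := fun α => f (x + α • p) - f x - α * η * s with hg
  have hg0 : g 0 = 0 := by simp [hg]
  have hηs : η * s < 0 := mul_neg_of_pos_of_neg hη0 hneg
  -- convexity of δ
  have haff : ∀ α : ℝ, x + α • p = AffineMap.lineMap x (x + p) α := by
    intro α
    simp [AffineMap.lineMap_apply, add_sub_cancel_left, add_comm]
  have δconv : ConvexOn ℝ Set.univ (fun α : ℝ => f (x + α • p)) := by
    have h := hconv.comp_affineMap (AffineMap.lineMap x (x + p))
    have : (AffineMap.lineMap x (x + p) : ℝ →ᵃ[ℝ] _) ⁻¹' Set.univ = Set.univ := by simp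
    rw [this] at h
    refine ⟨convex_univ, ?_⟩
    intro a ha b hb ta tb hta htb hab
    have := h.2 ha hb hta htb hab
    simpa [Function.comp, ← haff] using this
  have gconv : ConvexOn ℝ Set.univ g := by
    refine ⟨convex_univ, ?_⟩
    intro a ha b hb ta tb hta htb hab
    have hδ := δconv.2 ha hb hta htb hab
    simp only [smul_eq_mul] at hδ ⊢
    have e2 : f x = ta * f x + tb * f x := by rw [← add_mul, hab, one_mul]
    simp only [hg]
    nlinarith [hδ, e2]
  -- continuity of g
  have gcont : Continuous g := by
    apply Continuous.sub
    apply Continuous.sub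
    · exact hcont.comp (by fun_prop)
    · exact continuous_const
    · continuity
  -- derivative of g at 0 within Ici 0
  have gderiv : HasDerivWithinAt g ((1 - η) * s) (Set.Ici 0) 0 := by
    have h1 : HasDerivWithinAt (fun α : ℝ => α * η * s) (η * s) (Set.Ici 0) 0 := by
      simpa [mul_assoc] using
        ((hasDerivAt_mul_const (η * s)).hasDerivWithinAt :
          HasDerivWithinAt (fun α : ℝ => α * (η * s)) (η * s) (Set.Ici 0) 0)
    have := ((hderiv.sub_const (f x)).sub h1)
    convert this using 1
    · rfl
    · rfl
    · rfl
    · ring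
  -- small negative values
  have hsmall : ∀ ε > (0 : ℝ), ∃ α, 0 < α ∧ α < ε ∧ g α < 0 := by
    intro ε hε
    have hset : Set.Ici (0 : ℝ) \ {0} = Set.Ioi 0 := by
      ext t
      simp [Set.mem_diff, lt_iff_le_and_ne, eq_comm]
    have h1 := hasDerivWithinAt_iff_tendsto_slope.mp gderiv
    rw [hset] at h1
    have hd : (1 - η) * s < 0 := mul_neg_of_pos_of_neg (by linarith) hneg
    have h2 : ∀ᶠ α in nhdsWithin (0 : ℝ) (Set.Ioi 0), slope g 0 α < 0 :=
      h1.eventually_lt_const hd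
    have h3 : ∀ᶠ α in nhdsWithin (0 : ℝ) (Set.Ioi 0), α < ε :=
      Filter.eventually_of_mem (nhdsWithin_le_nhds (Iio_mem_nhds hε)) (fun _ hx => hx)
    have h4 : ∀ᶠ α in nhdsWithin (0 : ℝ) (Set.Ioi 0), α ∈ Set.Ioi (0 : ℝ) :=
      self_mem_nhdsWithin
    obtain ⟨α, ⟨hslope, hαε⟩, hα0⟩ := ((h2.and h3).and h4).exists
    refine ⟨α, hα0, hαε, ?_⟩
    rw [slope_def_field, hg0, sub_zero, sub_zero] at hslope
    have hαpos : 0 < α := hα0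
    rcases div_neg_iff.mp hslope with ⟨_, h⟩ | ⟨h, _⟩
    · linarith
    · exact h
  -- a point where g is positive
  obtain ⟨α₀, hα₀0, _, hα₀neg⟩ := hsmall 1 one_pos
  obtain ⟨m, hm⟩ := hbdd
  have hmle : ∀ y, m ≤ f y := fun y => hm (Set.mem_range_self y)
  set A : ℝ := max α₀ ((m - f x) / (η * s)) + 1 with hA
  have hα₀A : α₀ < A := by
    have h := le_max_left α₀ ((m - f x) / (η * s))
    rw [hA]
    linarith
  have hApos : (m - f x) / (η * s) < A := by
    have h := le_max_right α₀ ((m - f x) / (η * s))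
    rw [hA]
    linarith
  have hgA : 0 < g A := by
    have h1 : A * (η * s) < m - f x := (div_lt_iff_of_neg hηs).mp hApos
    have h2 := hmle (x + A • p)
    simp only [hg]
    nlinarith
  -- intermediate value
  have hsub := intermediate_value_Icc hα₀A.le (gcont.continuousOn (s := Set.Icc α₀ A))
  have h0mem : (0 : ℝ) ∈ Set.Icc (g α₀) (g A) := ⟨hα₀neg.le, hgA.le⟩
  obtain ⟨τ, hτmem, hτ0⟩ := hsub h0mem
  have hτpos : 0 < τ := lt_of_lt_of_le hα₀0 hτmem.1
  -- key uniqueness lemma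
  have key : ∀ τ₁ τ₂ : ℝ, 0 < τ₁ → τ₁ < τ₂ → g τ₁ = 0 → g τ₂ = 0 → False := by
    intro τ₁ τ₂ h1 h12 hgτ₁ hgτ₂
    obtain ⟨β, hβ0, hβτ₁, hβneg⟩ := hsmall τ₁ h1
    have hden : (0:ℝ) < τ₂ - β := by linarith
    have hapos : 0 < (τ₂ - τ₁) / (τ₂ - β) := div_pos (by linarith) hden
    have hbpos : 0 < (τ₁ - β) / (τ₂ - β) := div_pos (by linarith) hden
    have hab : (τ₂ - τ₁) / (τ₂ - β) + (τ₁ - β) / (τ₂ - β) = 1 := by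
      rw [← add_div, div_eq_one_iff_eq hden.ne']
      ring
    have hle := gconv.2 (Set.mem_univ β) (Set.mem_univ τ₂) hapos.le hbpos.le hab
    have hcomb : ((τ₂ - τ₁) / (τ₂ - β)) • β + ((τ₁ - β) / (τ₂ - β)) • τ₂ = τ₁ := by
      simp only [smul_eq_mul]
      field_simp
      ring
    rw [hcomb] at hle
    simp only [smul_eq_mul] at hle
    rw [hgτ₁, hgτ₂, mul_zero, add_zero] at hle
    exact absurd hle (not_le.mpr (mul_neg_of_pos_of_neg hapos hβneg))
  refine ⟨τ, ⟨hτpos, ?_, ?_⟩, ?_⟩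
  · have : g τ = 0 := hτ0
    simp only [hg] at this
    linarith
  · intro α hα
    have hseg : α ∈ segment ℝ (0 : ℝ) τ := by
      rw [segment_eq_Icc hτpos.le]
      exact hα
    have := gconv.le_on_segment (Set.mem_univ (0:ℝ)) (Set.mem_univ τ) hseg
    rw [hg0, hτ0] at this
    have h2 : g α ≤ 0 := le_trans this (by norm_num)
    simp only [hg] at h2
    linarith
  · rintro τ' ⟨hτ'pos, hτ'eq, _⟩
    have hgτ' : g τ' = 0 := by
      simp only [hg]
      linarith
    rcases lt_trichotomy τ' τ with h | h | h
    · exact absurd (key τ' τ hτ'pos h hgτ' hτ0) (fun h => h)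
    · exact h
    · exact absurd (key τ τ' hτpos h hτ0 hgτ') (fun h => h)
end

section
/- Let (θₖ) ⊂ (0,1) be a nonincreasing sequence such that whenever θₖ₊₁ < θₖ it is given by θₖ₊₁ = (1+r)(h(Nₖ) - h(Ñₖ₊₁)) / (2[f_{Ñₖ₊₁}(xₖ) - f_{Nₖ}(xₖ) + h(Nₖ) - h(Ñₖ₊₁)]), where h(Ñₖ₊₁) ≤ r·h(Nₖ), 0 < r < 1, h(Nₖ) > 0, and f_{Ñₖ₊₁}(xₖ) - f_{Nₖ}(xₖ) ≤ β·h(Nₖ) for a fixed β > 0. Then θₖ₊₁ ≥ (1+r)(1-r)/(2(β + 1 - r)) > 0 for every k at which the update occurs; consequently (θₖ) converges to some θ* > 0. -/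
open Filter

theorem stmt4 (r β : ℝ) (hr : 0 < r) (hr1 : r < 1) (hβ : 0 < β)
    (θ : ℕ → ℝ) (hθ01 : ∀ k, θ k ∈ Set.Ioo (0 : ℝ) 1) (hanti : Antitone θ)
    (hN ht : ℕ → ℝ) (ftx fNx : ℕ → ℝ)
    (hhN : ∀ k, 0 < hN k) (hhtnn : ∀ k, 0 ≤ ht k)
    (hrest : ∀ k, ht k ≤ r * hN k)
    (hfdiff : ∀ k, ftx k - fNx k ≤ β * hN k)
    (hupdate : ∀ k, θ (k + 1) < θ k →
      θ (k + 1) = (1 + r) * (hN k - ht k) /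
        (2 * (ftx k - fNx k + hN k - ht k))) :
    (∀ k, θ (k + 1) < θ k →
        (1 + r) * (1 - r) / (2 * (β + 1 - r)) ≤ θ (k + 1)) ∧
      ∃ θstar > 0, Tendsto θ atTop (nhds θstar) := by
  have hc : (0:ℝ) < (1 + r) * (1 - r) / (2 * (β + 1 - r)) := by
    apply div_pos <;> nlinarith
  have hbound : ∀ k, θ (k + 1) < θ k →
      (1 + r) * (1 - r) / (2 * (β + 1 - r)) ≤ θ (k + 1) := by
    intro k hk
    have heq := hupdate k hk
    have hs : (1 - r) * hN k ≤ hN k - ht k := by nlinarith [hrest k]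
    have hspos : 0 < hN k - ht k := by nlinarith [hhN k]
    have hnum : 0 < (1 + r) * (hN k - ht k) := by nlinarith
    have hden : 0 < 2 * (ftx k - fNx k + hN k - ht k) := by
      by_contra h
      push_neg at h
      have := (hθ01 (k+1)).1
      rw [heq] at this
      rcases lt_or_eq_of_le h with h' | h'
      · have : (1 + r) * (hN k - ht k) / (2 * (ftx k - fNx k + hN k - ht k)) < 0 :=
          div_neg_of_pos_of_neg hnum h'
        linarith
      · rw [h', div_zero] at this
        exact lt_irrefl _ this
    rw [heq, div_le_div_iff₀ (by nlinarith) hden]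
    have hd : ftx k - fNx k ≤ β * hN k := hfdiff k
    have key : (1 - r) * (ftx k - fNx k) ≤ β * (hN k - ht k) := by
      nlinarith [hhN k]
    nlinarith
  refine ⟨hbound, ?_⟩
  set c := (1 + r) * (1 - r) / (2 * (β + 1 - r)) with hcdef
  have hlow : ∀ k, min c (θ 0) ≤ θ k := by
    intro k
    induction k with
    | zero => exact min_le_right _ _
    | succ n ih =>
      rcases lt_or_ge (θ (n+1)) (θ n) with h | h
      · exact le_trans (min_le_left _ _) (hbound n h)
      · have : θ (n+1) = θ n := le_antisymm (hanti (Nat.le_succ n)) h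
        rw [this]; exact ih
  have hbdd : BddBelow (Set.range θ) := by
    refine ⟨min c (θ 0), ?_⟩
    rintro x ⟨k, rfl⟩
    exact hlow k
  refine ⟨⨅ k, θ k, ?_, tendsto_atTop_ciInf hanti hbdd⟩
  have : min c (θ 0) ≤ ⨅ k, θ k := le_ciInf hlow
  have h0 := (hθ01 0).1
  exact lt_of_lt_of_le (lt_min hc h0) this
end

section
/- Let f : ℝⁿ → ℝ be convex and let D ⊂ ℝⁿ be compact. Suppose (xₖ) ⊂ D, (fₖ : ℝⁿ → ℝ) convex functions, ḡₖ ∈ ∂fₖ(xₖ) with ḡₖ → 0 along a subsequence K, xₖ → x* along K, and sup_{x ∈ D̃} |fₖ(x) - f(x)| → 0 along K for a compact set D̃ whose interior contains D. Then f(x) ≥ f(x*) for all x ∈ D̃, and hence x* is a global minimizer of f on ℝⁿ. -/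
open Filter
open scoped RealInnerProductSpace

private lemma tendsto_of_abs_le (u : ℕ → ℝ) (L : ℝ)
    (h : ∀ ε > 0, ∃ I, ∀ i ≥ I, |u i - L| ≤ ε) : Filter.Tendsto u Filter.atTop (nhds L) := by
  rw [Metric.tendsto_atTop]
  intro ε hε
  obtain ⟨I, hI⟩ := h (ε / 2) (by linarith)
  exact ⟨I, fun i hi => by rw [Real.dist_eq]; linarith [hI i hi]⟩

theorem stmt8 {n : ℕ} (f : EuclideanSpace ℝ (Fin n) → ℝ)
    (hconv : ConvexOn ℝ Set.univ f)
    (D Dt : Set (EuclideanSpace ℝ (Fin n)))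
    (hD : IsCompact D) (hDt : IsCompact Dt) (hDsub : D ⊆ interior Dt)
    (x : ℕ → EuclideanSpace ℝ (Fin n)) (hxD : ∀ k, x k ∈ D)
    (fseq : ℕ → EuclideanSpace ℝ (Fin n) → ℝ)
    (hfconv : ∀ k, ConvexOn ℝ Set.univ (fseq k))
    (g : ℕ → EuclideanSpace ℝ (Fin n))
    (hg : ∀ k, g k ∈ subdiff (fseq k) (x k))
    (φ : ℕ → ℕ) (hφ : StrictMono φ)
    (hglim : Tendsto (fun i => g (φ i)) atTop (nhds 0))
    (xstar : EuclideanSpace ℝ (Fin n))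
    (hxlim : Tendsto (fun i => x (φ i)) atTop (nhds xstar))
    (hunif : ∀ ε > 0, ∃ I, ∀ i ≥ I, ∀ y ∈ Dt, |fseq (φ i) y - f y| ≤ ε) :
    (∀ y ∈ Dt, f xstar ≤ f y) ∧ ∀ y, f xstar ≤ f y := by
  -- continuity of f
  have hfc : Continuous f := by
    rw [← continuousOn_univ]
    exact hconv.continuousOn isOpen_univ
  have hxDt : ∀ i, x (φ i) ∈ Dt := fun i => interior_subset (hDsub (hxD (φ i)))
  have hxstarD : xstar ∈ D := hD.isClosed.mem_of_tendsto hxlim (Eventually.of_forall fun i => hxD (φ i))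
  have hDtmin : ∀ y ∈ Dt, f xstar ≤ f y := by
    intro y hy
    -- a_i := fseq (φ i) (x (φ i)) + ⟪g (φ i), y - x (φ i)⟫ ≤ fseq (φ i) y =: b_i
    have hab : ∀ i, fseq (φ i) (x (φ i)) + ⟪g (φ i), y - x (φ i)⟫ ≤ fseq (φ i) y :=
      fun i => hg (φ i) y
    have hb : Tendsto (fun i => fseq (φ i) y) atTop (nhds (f y)) := by
      apply tendsto_of_abs_le
      intro ε hε
      obtain ⟨I, hI⟩ := hunif ε hε
      exact ⟨I, fun i hi => hI i hi y hy⟩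
    have hdiff : Tendsto (fun i => fseq (φ i) (x (φ i)) - f (x (φ i))) atTop (nhds 0) := by
      apply tendsto_of_abs_le
      intro ε hε
      obtain ⟨I, hI⟩ := hunif ε hε
      exact ⟨I, fun i hi => by simpa using hI i hi _ (hxDt i)⟩
    have hfx : Tendsto (fun i => f (x (φ i))) atTop (nhds (f xstar)) :=
      (hfc.tendsto xstar).comp hxlim
    have ha1 : Tendsto (fun i => fseq (φ i) (x (φ i))) atTop (nhds (f xstar)) := by
      have := hdiff.add hfx
      simpa using this
    have hinner : Tendsto (fun i => ⟪g (φ i), y - x (φ i)⟫) atTop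
        (nhds (0 : ℝ)) := by
      have : Tendsto (fun i => ⟪g (φ i), y - x (φ i)⟫) atTop
          (nhds ⟪(0 : EuclideanSpace ℝ (Fin n)), y - xstar⟫) :=
        hglim.inner (tendsto_const_nhds.sub hxlim)
      simpa using this
    have ha : Tendsto (fun i => fseq (φ i) (x (φ i)) + ⟪g (φ i), y - x (φ i)⟫) atTop
        (nhds (f xstar)) := by
      have := ha1.add hinner
      simpa using this
    exact le_of_tendsto_of_tendsto' ha hb hab
  refine ⟨hDtmin, fun y => ?_⟩
  -- xstar is in the interior of Dt; convexity upgrades to global minimality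
  have hxint : xstar ∈ interior Dt := hDsub hxstarD
  obtain ⟨δ, hδ, hball⟩ := Metric.isOpen_iff.mp isOpen_interior xstar hxint
  by_cases hxy : y = xstar
  · rw [hxy]
  have hny : 0 < ‖y - xstar‖ := by
    simpa [sub_eq_zero] using hxy
  set t : ℝ := min 1 (δ / (2 * ‖y - xstar‖)) with ht
  have ht0 : 0 < t := lt_min one_pos (by positivity)
  have ht1 : t ≤ 1 := min_le_left _ _
  set z := xstar + t • (y - xstar) with hz
  have hzDt : z ∈ Dt := by
    apply interior_subset
    apply hball
    have : dist z xstar = t * ‖y - xstar‖ := by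
      simp [hz, dist_eq_norm, norm_smul, abs_of_pos ht0]
    rw [Metric.mem_ball, this]
    calc t * ‖y - xstar‖ ≤ (δ / (2 * ‖y - xstar‖)) * ‖y - xstar‖ := by
            apply mul_le_mul_of_nonneg_right (min_le_right _ _) (norm_nonneg _)
      _ = δ / 2 := by field_simp
      _ < δ := by linarith
  have hzle : f z ≤ (1 - t) * f xstar + t * f y := by
    have := hconv.2 (Set.mem_univ xstar) (Set.mem_univ y)
      (show (0:ℝ) ≤ 1 - t by linarith) (le_of_lt ht0) (by ring)
    have hz2 : z = (1 - t) • xstar + t • y := by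
      rw [hz]; module
    rw [hz2]
    simpa [smul_eq_mul] using this
  have h1 : f xstar ≤ f z := hDtmin z hzDt
  nlinarith [h1, hzle]
end

section
/- Let f : ℝⁿ → ℝ with inf f = f* > -∞, (xₖ) ⊂ ℝⁿ, ε₁ > 0, η > 0, ᾱ > 0, and (tₖ) nonnegative with ∑_{k} tₖ ≤ t̄ < ∞. Suppose (ḡₖ) ⊂ ℝⁿ satisfies f(x_{k+1}) ≤ f(xₖ) - η ᾱ ‖ḡₖ‖² + tₖ for all k, and let k̄ be the first index with ‖ḡ_{k̄}‖ ≤ ε₁ (assuming ‖ḡₖ‖ → 0 so k̄ exists). Then k̄ ≤ (t̄ + f(x₀) - f*)/(η ᾱ ε₁²). -/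
open Filter

theorem stmt11 {n : ℕ} (f : EuclideanSpace ℝ (Fin n) → ℝ) (fstar : ℝ)
    (hinf : IsGLB (Set.range f) fstar)
    (x g : ℕ → EuclideanSpace ℝ (Fin n)) (ε₁ η αbar tbar : ℝ) (t : ℕ → ℝ)
    (hε : 0 < ε₁) (hη : 0 < η) (hα : 0 < αbar)
    (htnn : ∀ k, 0 ≤ t k) (htsum : ∀ K : ℕ, ∑ k ∈ Finset.range K, t k ≤ tbar)
    (hdesc : ∀ k, f (x (k + 1)) ≤ f (x k) - η * αbar * ‖g k‖ ^ 2 + t k)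
    (hglim : Tendsto (fun k => ‖g k‖) atTop (nhds 0))
    (kbar : ℕ) (hk1 : ‖g kbar‖ ≤ ε₁) (hk2 : ∀ k < kbar, ε₁ < ‖g k‖) :
    (kbar : ℝ) ≤ (tbar + f (x 0) - fstar) / (η * αbar * ε₁ ^ 2) := by
  have hpos : 0 < η * αbar * ε₁ ^ 2 := by positivity
  rw [le_div_iff₀ hpos]
  have key : ∀ k < kbar, η * αbar * ε₁ ^ 2 ≤ f (x k) - f (x (k+1)) + t k := by
    intro k hk
    have h1 := hdesc k
    have h2 : ε₁ ^ 2 ≤ ‖g k‖ ^ 2 := by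
      have := (hk2 k hk).le
      nlinarith [norm_nonneg (g k)]
    nlinarith [mul_le_mul_of_nonneg_left h2 (le_of_lt (mul_pos hη hα))]
  have hsum : (kbar : ℝ) * (η * αbar * ε₁ ^ 2) ≤ ∑ k ∈ Finset.range kbar, (f (x k) - f (x (k+1)) + t k) := by
    calc (kbar : ℝ) * (η * αbar * ε₁ ^ 2) = ∑ _k ∈ Finset.range kbar, (η * αbar * ε₁ ^ 2) := by
          simp [mul_comm]
    _ ≤ _ := Finset.sum_le_sum (fun k hk => key k (Finset.mem_range.mp hk))
  have htele : ∑ k ∈ Finset.range kbar, (f (x k) - f (x (k+1)) + t k)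
      = f (x 0) - f (x kbar) + ∑ k ∈ Finset.range kbar, t k := by
    rw [Finset.sum_add_distrib, Finset.sum_range_sub' (fun k => f (x k))]
  have hfs : fstar ≤ f (x kbar) := hinf.1 ⟨x kbar, rfl⟩
  have hts := htsum kbar
  rw [htele] at hsum
  linarith
end

section
/- Let f : ℝⁿ → ℝ be bounded below, (tₖ) nonnegative with tₖ → 0, η, ᾱ, ϱ > 0, b ∈ ℕ, and let (k_i) be a strictly increasing sequence of indices with k_{i+1} - k_i ≤ b. Suppose (xₖ), (ḡₖ) satisfy f(x_{k+1}) ≤ f(xₖ) - η ᾱ ‖ḡₖ‖² + tₖ for all k, and x_{k_i} → x* with f continuous at x*. Then lim inf_{i→∞} ‖ḡ_{k_i}‖ = 0. -/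
open Filter

theorem stmt13 {n : ℕ} (f : EuclideanSpace ℝ (Fin n) → ℝ)
    (hbdd : BddBelow (Set.range f))
    (t : ℕ → ℝ) (htnn : ∀ k, 0 ≤ t k) (htlim : Tendsto t atTop (nhds 0))
    (η αbar ϱ : ℝ) (hη : 0 < η) (hα : 0 < αbar) (hϱ : 0 < ϱ) (b : ℕ)
    (kk : ℕ → ℕ) (hkmono : StrictMono kk) (hgap : ∀ i, kk (i + 1) - kk i ≤ b)
    (x g : ℕ → EuclideanSpace ℝ (Fin n))
    (hdesc : ∀ k, f (x (k + 1)) ≤ f (x k) - η * αbar * ‖g k‖ ^ 2 + t k)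
    (xstar : EuclideanSpace ℝ (Fin n))
    (hxlim : Tendsto (fun i => x (kk i)) atTop (nhds xstar))
    (hfcont : ContinuousAt f xstar) :
    liminf (fun i => ‖g (kk i)‖) atTop = 0 := by
  -- chained descent inequality
  have key : ∀ k m, k + 1 ≤ m →
      f (x m) ≤ f (x k) - η * αbar * ‖g k‖ ^ 2 + ∑ j ∈ Finset.Ico k m, t j := by
    intro k m hm
    induction m, hm using Nat.le_induction with
    | base =>
      have : ∑ j ∈ Finset.Ico k (k + 1), t j = t k := by
        rw [Finset.sum_Ico_succ_top (le_refl k), Finset.Ico_self, Finset.sum_empty, zero_add]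
      rw [this]; exact hdesc k
    | succ m hm ih =>
      have h1 := hdesc m
      have h2 : f (x (m + 1)) ≤ f (x m) + t m := by
        nlinarith [sq_nonneg ‖g m‖, mul_pos hη hα]
      have hkm : k ≤ m := le_trans (Nat.le_succ k) hm
      rw [Finset.sum_Ico_succ_top hkm]
      linarith
  -- the gap sums of t tend to 0
  set ω : ℕ → ℝ := fun i => ∑ j ∈ Finset.Ico (kk i) (kk (i + 1)), t j with hω_def
  have hωnn : ∀ i, 0 ≤ ω i := fun i => Finset.sum_nonneg fun j _ => htnn j
  have hωlim : Tendsto ω atTop (nhds 0) := by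
    rw [Metric.tendsto_atTop] at htlim ⊢
    intro ε hε
    obtain ⟨N, hN⟩ := htlim (ε / (b + 1)) (by positivity)
    refine ⟨N, fun i hi => ?_⟩
    have hbound : ∀ j ∈ Finset.Ico (kk i) (kk (i + 1)), t j ≤ ε / (b + 1) := by
      intro j hj
      have hjN : N ≤ j := by
        have h1 : i ≤ kk i := hkmono.le_apply
        have h2 : kk i ≤ j := (Finset.mem_Ico.mp hj).1
        omega
      have := hN j hjN
      rw [Real.dist_eq, sub_zero] at this
      exact le_of_lt (lt_of_le_of_lt (le_abs_self _) this)
    have hsum : ω i ≤ (Finset.Ico (kk i) (kk (i + 1))).card • (ε / (b + 1)) :=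
      Finset.sum_le_card_nsmul _ _ _ hbound
    have hcard : (Finset.Ico (kk i) (kk (i + 1))).card ≤ b := by
      rw [Nat.card_Ico]; exact hgap i
    have hsum2 : ω i ≤ (b : ℝ) * (ε / (b + 1)) := by
      rw [nsmul_eq_mul] at hsum
      refine le_trans hsum (mul_le_mul_of_nonneg_right ?_ (by positivity))
      exact_mod_cast hcard
    have hfinal : (b : ℝ) * (ε / (b + 1)) < ε := by
      rw [mul_div_assoc']
      rw [div_lt_iff₀ (by positivity)]
      nlinarith
    rw [Real.dist_eq, sub_zero, abs_of_nonneg (hωnn i)]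
    exact lt_of_le_of_lt hsum2 hfinal
  -- limits of f along the subsequence
  have hF : Tendsto (fun i => f (x (kk i))) atTop (nhds (f xstar)) :=
    hfcont.tendsto.comp hxlim
  have hF' : Tendsto (fun i => f (x (kk (i + 1)))) atTop (nhds (f xstar)) :=
    hF.comp (tendsto_add_atTop_nat 1)
  -- liminf analysis
  by_contra hL
  set S : Set ℝ := {a | ∀ᶠ i in atTop, a ≤ ‖g (kk i)‖} with hS_def
  have h0S : (0 : ℝ) ∈ S := Eventually.of_forall fun i => norm_nonneg _
  have hliminf_eq : liminf (fun i => ‖g (kk i)‖) atTop = sSup S := Filter.liminf_eq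
  by_cases hbddS : BddAbove S
  · set L := liminf (fun i => ‖g (kk i)‖) atTop with hLdef
    have hL0 : 0 ≤ L := hliminf_eq ▸ le_csSup hbddS h0S
    have hLpos : 0 < L := lt_of_le_of_ne hL0 (Ne.symm hL)
    have hex : ∃ a ∈ S, L / 2 < a := by
      by_contra h
      push_neg at h
      have hss : sSup S ≤ L / 2 := csSup_le ⟨0, h0S⟩ fun a ha => h a ha
      rw [← hliminf_eq] at hss
      linarith
    obtain ⟨a, haS, haL⟩ := hex
    have hc : ∀ᶠ i in atTop, L / 2 ≤ ‖g (kk i)‖ :=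
      haS.mono fun i hi => le_trans (le_of_lt haL) hi
    have hev : ∀ᶠ i in atTop, η * αbar * (L / 2) ^ 2 ≤
        f (x (kk i)) - f (x (kk (i + 1))) + ω i := by
      refine hc.mono fun i hi => ?_
      have hlt : kk i + 1 ≤ kk (i + 1) := hkmono (Nat.lt_succ_self i)
      have hkey := key (kk i) (kk (i + 1)) hlt
      have hsq : (L / 2) ^ 2 ≤ ‖g (kk i)‖ ^ 2 := by
        have : 0 ≤ L / 2 := by linarith
        nlinarith
      nlinarith [mul_pos hη hα]
    have htend : Tendsto (fun i => f (x (kk i)) - f (x (kk (i + 1))) + ω i)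
        atTop (nhds 0) := by
      have := (hF.sub hF').add hωlim
      simpa using this
    have hle : η * αbar * (L / 2) ^ 2 ≤ 0 := ge_of_tendsto htend hev
    have hpos : 0 < (L / 2) ^ 2 := by positivity
    nlinarith [mul_pos hη hα]
  · exact hL (by rw [hliminf_eq]; exact Real.sSup_of_not_bddAbove hbddS)
end
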